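/- The following explicit loop in SO(3) is null-homotopic (path-homotopic, relative to its endpoints, to the constant loop at the identity matrix, within the subspace SO(3) of 3×3 real matrices): the concatenation of the four paths of orthonormal 2-frames, each completed to an SO(3)-valued path by the rule (v₁, v₂) ↦ [v₁×v₂ | v₁ | v₂], given for t ∈ [0,1] by: (1) v₁(t) = cos(πt)·e₁ + sin(πt)·ē, v₂(t) = e₂, running from [e₁, e₂] to [−e₁, e₂]; (2) v₁(t) = −e₁, v₂(t) = cos(πt)·e₂ − sin(πt)·ē, running from [−e₁, e₂] to [−e₁, −e₂]; (3) v₁(t) = −cos(πt)·e₁ + sin(πt)·ē, v₂(t) = −e₂, running from [−e₁, −e₂] to [e₁, −e₂]; (4) v₁(t) = e₁, v₂(t) = −cos(πt)·e₂ + sin(πt)·ē, running from [e₁, −e₂] back to [e₁, e₂]. (This is the verification that the loop (⁺₊⁺₋)·(⁺₋⁻₋)·(⁻₋⁻₊)·(⁻₊⁺₊) of the coherent system of frame paths is null-homotopic in SO(3).) -/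

import Mathlib

noncomputable section

open Real

set_option linter.unnecessarySeqFocus false

/-- `SO(3)`: the special orthogonal group of 3×3 real matrices, topologized as a subspace
of the 3×3 matrices. -/
abbrev SO3 := {M : Matrix (Fin 3) (Fin 3) ℝ // M.transpose * M = 1 ∧ M.det = 1}

/-- The standard basis vector `ē = (1,0,0)` of `ℝ³`. -/
def eBar : Fin 3 → ℝ := ![1, 0, 0]

/-- The standard basis vector `e₁ = (0,1,0)` of `ℝ³`. -/
def eOne : Fin 3 → ℝ := ![0, 1, 0]

/-- The standard basis vector `e₂ = (0,0,1)` of `ℝ³`. -/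
def eTwo : Fin 3 → ℝ := ![0, 0, 1]

/-- The matrix `[v₁×v₂ | v₁ | v₂]` whose columns are `v₁×v₂`, `v₁`, `v₂`; for an
orthonormal pair `(v₁, v₂)` it lies in `SO(3)`. -/
def frameMatrix (v₁ v₂ : Fin 3 → ℝ) : Matrix (Fin 3) (Fin 3) ℝ :=
  Matrix.of fun i j => ![crossProduct v₁ v₂, v₁, v₂] j i

/-- The identity element of `SO(3)`; it is the matrix of the frame `[e₁, e₂]`. -/
def so3One : SO3 := ⟨1, by simp, by simp⟩

/-- The frame `[−e₁, e₂]` as an element of `SO(3)`. -/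
def so3MP : SO3 := ⟨frameMatrix (-eOne) eTwo, by
  refine ⟨?_, ?_⟩
  · ext i j
    fin_cases i <;> fin_cases j <;>
      simp [frameMatrix, cross_apply, eOne, eTwo, Matrix.mul_apply, Fin.sum_univ_three,
        Matrix.one_apply, Matrix.transpose_apply, Matrix.vecHead, Matrix.vecTail]
  · simp [frameMatrix, cross_apply, eOne, eTwo, Matrix.det_fin_three, Matrix.vecHead,
      Matrix.vecTail]⟩

/-- The frame `[−e₁, −e₂]` as an element of `SO(3)`. -/
def so3MM : SO3 := ⟨frameMatrix (-eOne) (-eTwo), by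
  refine ⟨?_, ?_⟩
  · ext i j
    fin_cases i <;> fin_cases j <;>
      simp [frameMatrix, cross_apply, eOne, eTwo, Matrix.mul_apply, Fin.sum_univ_three,
        Matrix.one_apply, Matrix.transpose_apply, Matrix.vecHead, Matrix.vecTail]
  · simp [frameMatrix, cross_apply, eOne, eTwo, Matrix.det_fin_three, Matrix.vecHead,
      Matrix.vecTail]⟩

/-- The frame `[e₁, −e₂]` as an element of `SO(3)`. -/
def so3PM : SO3 := ⟨frameMatrix eOne (-eTwo), by
  refine ⟨?_, ?_⟩
  · ext i j
    fin_cases i <;> fin_cases j <;>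
      simp [frameMatrix, cross_apply, eOne, eTwo, Matrix.mul_apply, Fin.sum_univ_three,
        Matrix.one_apply, Matrix.transpose_apply, Matrix.vecHead, Matrix.vecTail]
  · simp [frameMatrix, cross_apply, eOne, eTwo, Matrix.det_fin_three, Matrix.vecHead,
      Matrix.vecTail]⟩

/-- The frame path `(⁺₊⁺₋)`: `v₁(t) = cos(πt)·e₁ + sin(πt)·ē`, `v₂(t) = e₂`, running from
`[e₁, e₂]` (the identity) to `[−e₁, e₂]`. -/
def pathA : Path so3One so3MP where
  toFun t := ⟨frameMatrix (fun i => cos (π * t) * eOne i + sin (π * t) * eBar i) eTwo, by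
    have h := sin_sq_add_cos_sq (π * (t : ℝ))
    refine ⟨?_, ?_⟩
    · ext i j
      fin_cases i <;> fin_cases j <;>
        (simp [frameMatrix, cross_apply, eOne, eTwo, eBar, Matrix.mul_apply,
          Fin.sum_univ_three, Matrix.one_apply, Matrix.transpose_apply, Matrix.vecHead,
          Matrix.vecTail] <;> nlinarith [h])
    · simp [frameMatrix, cross_apply, eOne, eTwo, eBar, Matrix.det_fin_three,
        Matrix.vecHead, Matrix.vecTail] <;> nlinarith [h]⟩
  continuous_toFun := by
    apply Continuous.subtype_mk
    apply continuous_matrix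
    intro i j
    fin_cases i <;> fin_cases j <;>
      (simp [frameMatrix, cross_apply, eOne, eTwo, eBar, Matrix.vecHead, Matrix.vecTail] <;>
        fun_prop)
  source' := by
    apply Subtype.ext
    ext i j
    fin_cases i <;> fin_cases j <;>
      simp [frameMatrix, cross_apply, eOne, eTwo, eBar, so3One, Matrix.one_apply,
        Matrix.vecHead, Matrix.vecTail]
  target' := by
    apply Subtype.ext
    ext i j
    fin_cases i <;> fin_cases j <;>
      simp [frameMatrix, cross_apply, eOne, eTwo, eBar, so3MP, Matrix.vecHead,
        Matrix.vecTail]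

/-- The frame path `(⁺₋⁻₋)`: `v₁(t) = −e₁`, `v₂(t) = cos(πt)·e₂ − sin(πt)·ē`, running
from `[−e₁, e₂]` to `[−e₁, −e₂]`. -/
def pathB : Path so3MP so3MM where
  toFun t := ⟨frameMatrix (-eOne) (fun i => cos (π * t) * eTwo i - sin (π * t) * eBar i), by
    have h := sin_sq_add_cos_sq (π * (t : ℝ))
    refine ⟨?_, ?_⟩
    · ext i j
      fin_cases i <;> fin_cases j <;>
        (simp [frameMatrix, cross_apply, eOne, eTwo, eBar, Matrix.mul_apply,
          Fin.sum_univ_three, Matrix.one_apply, Matrix.transpose_apply, Matrix.vecHead,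
          Matrix.vecTail] <;> nlinarith [h])
    · simp [frameMatrix, cross_apply, eOne, eTwo, eBar, Matrix.det_fin_three,
        Matrix.vecHead, Matrix.vecTail] <;> nlinarith [h]⟩
  continuous_toFun := by
    apply Continuous.subtype_mk
    apply continuous_matrix
    intro i j
    fin_cases i <;> fin_cases j <;>
      (simp [frameMatrix, cross_apply, eOne, eTwo, eBar, Matrix.vecHead, Matrix.vecTail] <;>
        fun_prop)
  source' := by
    apply Subtype.ext
    ext i j
    fin_cases i <;> fin_cases j <;>
      simp [frameMatrix, cross_apply, eOne, eTwo, eBar, so3MP, Matrix.vecHead,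
        Matrix.vecTail]
  target' := by
    apply Subtype.ext
    ext i j
    fin_cases i <;> fin_cases j <;>
      simp [frameMatrix, cross_apply, eOne, eTwo, eBar, so3MM, Matrix.vecHead,
        Matrix.vecTail]

/-- The frame path `(⁻₋⁻₊)`: `v₁(t) = −cos(πt)·e₁ + sin(πt)·ē`, `v₂(t) = −e₂`, running
from `[−e₁, −e₂]` to `[e₁, −e₂]`. -/
def pathC : Path so3MM so3PM where
  toFun t := ⟨frameMatrix (fun i => -cos (π * t) * eOne i + sin (π * t) * eBar i) (-eTwo), by
    have h := sin_sq_add_cos_sq (π * (t : ℝ))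
    refine ⟨?_, ?_⟩
    · ext i j
      fin_cases i <;> fin_cases j <;>
        (simp [frameMatrix, cross_apply, eOne, eTwo, eBar, Matrix.mul_apply,
          Fin.sum_univ_three, Matrix.one_apply, Matrix.transpose_apply, Matrix.vecHead,
          Matrix.vecTail] <;> nlinarith [h])
    · simp [frameMatrix, cross_apply, eOne, eTwo, eBar, Matrix.det_fin_three,
        Matrix.vecHead, Matrix.vecTail] <;> nlinarith [h]⟩
  continuous_toFun := by
    apply Continuous.subtype_mk
    apply continuous_matrix
    intro i j
    fin_cases i <;> fin_cases j <;>
      (simp [frameMatrix, cross_apply, eOne, eTwo, eBar, Matrix.vecHead, Matrix.vecTail] <;>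
        fun_prop)
  source' := by
    apply Subtype.ext
    ext i j
    fin_cases i <;> fin_cases j <;>
      simp [frameMatrix, cross_apply, eOne, eTwo, eBar, so3MM, Matrix.vecHead,
        Matrix.vecTail]
  target' := by
    apply Subtype.ext
    ext i j
    fin_cases i <;> fin_cases j <;>
      simp [frameMatrix, cross_apply, eOne, eTwo, eBar, so3PM, Matrix.vecHead,
        Matrix.vecTail]

/-- The frame path `(⁻₊⁺₊)`: `v₁(t) = e₁`, `v₂(t) = −cos(πt)·e₂ + sin(πt)·ē`, running
from `[e₁, −e₂]` back to `[e₁, e₂]`. -/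
def pathD : Path so3PM so3One where
  toFun t := ⟨frameMatrix eOne (fun i => -cos (π * t) * eTwo i + sin (π * t) * eBar i), by
    have h := sin_sq_add_cos_sq (π * (t : ℝ))
    refine ⟨?_, ?_⟩
    · ext i j
      fin_cases i <;> fin_cases j <;>
        (simp [frameMatrix, cross_apply, eOne, eTwo, eBar, Matrix.mul_apply,
          Fin.sum_univ_three, Matrix.one_apply, Matrix.transpose_apply, Matrix.vecHead,
          Matrix.vecTail] <;> nlinarith [h])
    · simp [frameMatrix, cross_apply, eOne, eTwo, eBar, Matrix.det_fin_three,
        Matrix.vecHead, Matrix.vecTail] <;> nlinarith [h]⟩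
  continuous_toFun := by
    apply Continuous.subtype_mk
    apply continuous_matrix
    intro i j
    fin_cases i <;> fin_cases j <;>
      (simp [frameMatrix, cross_apply, eOne, eTwo, eBar, Matrix.vecHead, Matrix.vecTail] <;>
        fun_prop)
  source' := by
    apply Subtype.ext
    ext i j
    fin_cases i <;> fin_cases j <;>
      simp [frameMatrix, cross_apply, eOne, eTwo, eBar, so3PM, Matrix.vecHead,
        Matrix.vecTail]
  target' := by
    apply Subtype.ext
    ext i j
    fin_cases i <;> fin_cases j <;>
      simp [frameMatrix, cross_apply, eOne, eTwo, eBar, so3One, Matrix.one_apply,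
        Matrix.vecHead, Matrix.vecTail]

/-!
Identify `ē, e₁, e₂` with the quaternions `i, j, k`. The map `q ↦ (v ↦ q v q⁻¹)` sends every
nonzero quaternion to a rotation, and each of the four frame paths is the image of a quarter
of a great circle of unit quaternions: `1 → -k → i → j → 1`. The lifted loop closes up and
stays in the closed half-space `re ≥ 0` minus the origin, which is star-shaped about `1`,
so it contracts there; pushing the contraction down gives the null-homotopy in `SO(3)`.
-/

open Quaternion unitInterval

section QuarterArc

variable {E : Type*} [NormedAddCommGroup E] [InnerProductSpace ℝ E]

def quarterArc (x y : E) : Path x y where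
  toFun t := cos (π * t / 2) • x + sin (π * t / 2) • y
  source' := by simp
  target' := by simp

@[simp]
theorem quarterArc_apply (x y : E) (t : I) :
    quarterArc x y t = cos (π * t / 2) • x + sin (π * t / 2) • y := rfl

theorem norm_quarterArc {x y : E} (hx : ‖x‖ = 1) (hy : ‖y‖ = 1) (hxy : inner ℝ x y = 0)
    (t : I) : ‖quarterArc x y t‖ = 1 := by
  rw [← pow_eq_one_iff_of_nonneg (norm_nonneg _) two_ne_zero, quarterArc_apply,
    norm_add_sq_real, norm_smul, norm_smul, inner_smul_left, inner_smul_right, hxy, hx, hy]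
  simp

end QuarterArc

section PunctHalfSpace

variable {E : Type*} [NormedAddCommGroup E] [InnerProductSpace ℝ E]

def punctHalfSpace (x : E) : Set E := {y | 0 ≤ inner ℝ x y ∧ y ≠ 0}

theorem starConvex_punctHalfSpace {x : E} (hx : x ≠ 0) :
    StarConvex ℝ x (punctHalfSpace x) := by
  rintro y ⟨hxy, hy⟩ a b ha hb hab
  have hinner : inner ℝ x (a • x + b • y) = a * ‖x‖ ^ 2 + b * inner ℝ x y := by
    rw [inner_add_right, inner_smul_right, inner_smul_right, real_inner_self_eq_norm_sq]
  have hx2 : 0 < ‖x‖ ^ 2 := by positivity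
  refine ⟨hinner ▸ by positivity, fun h => ?_⟩
  rw [h, inner_zero_right] at hinner
  obtain rfl : a = 0 := by nlinarith
  obtain rfl : b = 1 := by linarith
  simp [hy] at h

theorem isSimplyConnected_punctHalfSpace {x : E} (hx : x ≠ 0) :
    IsSimplyConnected (punctHalfSpace x) :=
  have hmem : x ∈ punctHalfSpace x := ⟨real_inner_self_nonneg, hx⟩
  have := (starConvex_punctHalfSpace hx).contractibleSpace ⟨x, hmem⟩
  SimplyConnectedSpace.ofContractible _

theorem range_quarterArc_subset_punctHalfSpace {x y z : E} (hx : ‖x‖ = 1) (hy : ‖y‖ = 1)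
    (hxy : inner ℝ x y = 0) (hzx : 0 ≤ inner ℝ z x) (hzy : 0 ≤ inner ℝ z y) :
    Set.range (quarterArc x y) ⊆ punctHalfSpace z := by
  rintro _ ⟨t, rfl⟩
  have hθ : π * t / 2 ∈ Set.Icc 0 (π / 2) := by
    constructor <;> nlinarith [pi_pos, t.2.1, t.2.2]
  refine ⟨?_, fun h => by simpa [h] using norm_quarterArc hx hy hxy t⟩
  have hcos := cos_nonneg_of_mem_Icc ⟨by linarith [hθ.1, pi_pos], hθ.2⟩
  have hsin := sin_nonneg_of_nonneg_of_le_pi hθ.1 (by linarith [hθ.2, pi_pos])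
  simpa [inner_add_right, inner_smul_right] using
    add_nonneg (mul_nonneg hcos hzx) (mul_nonneg hsin hzy)

end PunctHalfSpace

theorem Path.homotopic_refl_of_lift {X Y : Type*} [TopologicalSpace X] [TopologicalSpace Y]
    {s : Set X} (hs : IsSimplyConnected s) {f : s → Y} (hf : Continuous f) {x : X}
    (γ : Path x x) (hγ : Set.range γ ⊆ s) {y : Y} (δ : Path y y)
    (hδ : ∀ t, δ t = f ⟨γ t, hγ ⟨t, rfl⟩⟩) : δ.Homotopic (Path.refl y) := by
  have := hs.simplyConnectedSpace
  let γs : Path (⟨x, by simpa using hγ ⟨0, rfl⟩⟩ : s) ⟨x, by simpa using hγ ⟨0, rfl⟩⟩ :=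
    { toFun t := ⟨γ t, hγ ⟨t, rfl⟩⟩
      source' := by simp
      target' := by simp }
  obtain rfl : y = f ⟨x, _⟩ := by simpa [γs] using hδ 0
  obtain rfl : δ = γs.map hf := by ext t; exact hδ t
  exact (SimplyConnectedSpace.paths_homotopic γs (Path.refl _)).map ⟨f, hf⟩

theorem Path.comp_trans_apply_eq {X Y Z : Type*} [TopologicalSpace X] [TopologicalSpace Y]
    {f : X → Z} {g : Y → Z} {x₀ x₁ x₂ : X} {y₀ y₁ y₂ : Y} {γ₁ : Path x₀ x₁} {γ₂ : Path x₁ x₂}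
    {δ₁ : Path y₀ y₁} {δ₂ : Path y₁ y₂} (h₁ : ∀ t, f (γ₁ t) = g (δ₁ t))
    (h₂ : ∀ t, f (γ₂ t) = g (δ₂ t)) (t : I) : f ((γ₁.trans γ₂) t) = g ((δ₁.trans δ₂) t) := by
  simp only [Path.trans_apply]
  split_ifs
  exacts [h₁ _, h₂ _]

/-- The matrix of `v ↦ q v q⋆` on the imaginary quaternions, in the basis `i, j, k`. -/
def quatMatrix (q : ℍ[ℝ]) : Matrix (Fin 3) (Fin 3) ℝ :=
  !![q.re ^ 2 + q.imI ^ 2 - q.imJ ^ 2 - q.imK ^ 2, 2 * (q.imI * q.imJ - q.re * q.imK),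
      2 * (q.imI * q.imK + q.re * q.imJ);
    2 * (q.imI * q.imJ + q.re * q.imK), q.re ^ 2 - q.imI ^ 2 + q.imJ ^ 2 - q.imK ^ 2,
      2 * (q.imJ * q.imK - q.re * q.imI);
    2 * (q.imI * q.imK - q.re * q.imJ), 2 * (q.imJ * q.imK + q.re * q.imI),
      q.re ^ 2 - q.imI ^ 2 - q.imJ ^ 2 + q.imK ^ 2]

theorem quatMatrix_transpose_mul_self (q : ℍ[ℝ]) :
    (quatMatrix q).transpose * quatMatrix q = normSq q ^ 2 • 1 := by
  ext i j
  fin_cases i <;> fin_cases j <;>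
    simp [quatMatrix, Matrix.mul_apply, Fin.sum_univ_three, normSq_def'] <;> ring

theorem det_quatMatrix (q : ℍ[ℝ]) : (quatMatrix q).det = normSq q ^ 3 := by
  simp [quatMatrix, Matrix.det_fin_three, normSq_def']
  ring

attribute [local fun_prop] continuous_re continuous_imI continuous_imJ continuous_imK

theorem continuous_quatMatrix : Continuous quatMatrix := by
  refine continuous_matrix fun i j => ?_
  fin_cases i <;> fin_cases j <;> simp [quatMatrix] <;> fun_prop

def rotationMatrix (q : ℍ[ℝ]) : Matrix (Fin 3) (Fin 3) ℝ := (normSq q)⁻¹ • quatMatrix q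

def quatRotation (q : {q : ℍ[ℝ] // q ≠ 0}) : SO3 :=
  ⟨rotationMatrix q, by
    have := normSq_ne_zero.2 q.2
    rw [rotationMatrix, Matrix.transpose_smul, Matrix.smul_mul, Matrix.mul_smul,
      quatMatrix_transpose_mul_self, smul_smul, smul_smul, ← pow_two, ← mul_pow, inv_mul_cancel₀ this, one_pow, one_smul], by
    rw [rotationMatrix, Matrix.det_smul, det_quatMatrix]
    simp [normSq_ne_zero.2 q.2]⟩

theorem continuous_quatRotation : Continuous quatRotation :=
  (((continuous_normSq.comp continuous_subtype_val).inv₀ fun q => normSq_ne_zero.2 q.2).smul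
    (continuous_quatMatrix.comp continuous_subtype_val)).subtype_mk _

@[simps] def quatI : ℍ[ℝ] := ⟨0, 1, 0, 0⟩
@[simps] def quatJ : ℍ[ℝ] := ⟨0, 0, 1, 0⟩
@[simps] def quatK : ℍ[ℝ] := ⟨0, 0, 0, 1⟩

theorem norm_quatI : ‖quatI‖ = 1 := by rw [norm_eq_sqrt_real_inner, inner_def]; simp
theorem norm_quatJ : ‖quatJ‖ = 1 := by rw [norm_eq_sqrt_real_inner, inner_def]; simp
theorem norm_quatK : ‖quatK‖ = 1 := by rw [norm_eq_sqrt_real_inner, inner_def]; simp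

theorem cos_sin_eq_double_of_half (x : ℝ) :
    cos x = cos (x / 2) ^ 2 - sin (x / 2) ^ 2 ∧ sin x = 2 * sin (x / 2) * cos (x / 2) := by
  rw [← cos_two_mul', ← sin_two_mul, mul_div_cancel₀ _ two_ne_zero]
  exact ⟨rfl, rfl⟩

theorem pathA_eq_rotationMatrix (t : I) :
    (pathA t).1 = rotationMatrix (quarterArc 1 (-quatK) t) := by
  obtain ⟨hc, hs⟩ := cos_sin_eq_double_of_half (π * t)
  ext i j
  fin_cases i <;> fin_cases j <;>
    simp [pathA, rotationMatrix, quatMatrix, frameMatrix, normSq_def', cross_apply, eOne, eTwo,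
      eBar, hc, hs, cos_sq'] <;> ring

theorem pathB_eq_rotationMatrix (t : I) :
    (pathB t).1 = rotationMatrix (quarterArc (-quatK) quatI t) := by
  obtain ⟨hc, hs⟩ := cos_sin_eq_double_of_half (π * t)
  ext i j
  fin_cases i <;> fin_cases j <;>
    simp [pathB, rotationMatrix, quatMatrix, frameMatrix, normSq_def', cross_apply, eOne, eTwo,
      eBar, hc, hs, cos_sq'] <;> ring

theorem pathC_eq_rotationMatrix (t : I) :
    (pathC t).1 = rotationMatrix (quarterArc quatI quatJ t) := by
  obtain ⟨hc, hs⟩ := cos_sin_eq_double_of_half (π * t)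
  ext i j
  fin_cases i <;> fin_cases j <;>
    simp [pathC, rotationMatrix, quatMatrix, frameMatrix, normSq_def', cross_apply, eOne, eTwo,
      eBar, hc, hs, cos_sq'] <;> ring

theorem pathD_eq_rotationMatrix (t : I) :
    (pathD t).1 = rotationMatrix (quarterArc quatJ 1 t) := by
  obtain ⟨hc, hs⟩ := cos_sin_eq_double_of_half (π * t)
  ext i j
  fin_cases i <;> fin_cases j <;>
    simp [pathD, rotationMatrix, quatMatrix, frameMatrix, normSq_def', cross_apply, eOne, eTwo,
      eBar, hc, hs, cos_sq'] <;> ring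

/-- The loop `(⁺₊⁺₋)·(⁺₋⁻₋)·(⁻₋⁻₊)·(⁻₊⁺₊)` of standard frame paths is null-homotopic in
`SO(3)`: it is path-homotopic, rel endpoints, to the constant loop at the identity. -/
theorem loop_four_edges_nullhomotopic :
    (((pathA.trans pathB).trans pathC).trans pathD).Homotopic (Path.refl so3One) := by
  let lift := (((quarterArc 1 (-quatK)).trans (quarterArc (-quatK) quatI)).trans
    (quarterArc quatI quatJ)).trans (quarterArc quatJ 1)
  have hlift : Set.range lift ⊆ punctHalfSpace 1 := by
    simp only [lift, Path.trans_range, Set.union_subset_iff]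
    refine ⟨⟨⟨?_, ?_⟩, ?_⟩, ?_⟩ <;> apply range_quarterArc_subset_punctHalfSpace <;>
      simp [inner_def, norm_quatI, norm_quatJ, norm_quatK]
  have hproj (t : I) :
      ((((pathA.trans pathB).trans pathC).trans pathD) t).1 = rotationMatrix (lift t) :=
    Path.comp_trans_apply_eq (Path.comp_trans_apply_eq (Path.comp_trans_apply_eq
      pathA_eq_rotationMatrix pathB_eq_rotationMatrix) pathC_eq_rotationMatrix)
      pathD_eq_rotationMatrix t
  exact Path.homotopic_refl_of_lift (isSimplyConnected_punctHalfSpace one_ne_zero)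
    (f := fun q => quatRotation ⟨q.1, q.2.2⟩)
    (continuous_quatRotation.comp (continuous_subtype_val.subtype_mk _)) lift hlift _
    fun t => Subtype.ext (hproj t)

end
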